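/- Let X, Y be separable Banach spaces, G ⊆ X open, and f : G → Y an arbitrary mapping. Then there exists a σ-upper porous set A ⊆ G such that for each x ∈ G \ A the following holds: if f is Lipschitz at x, f is Fréchet differentiable at x along a closed subspace Mˣ of X of finite codimension, and there is a set Sₓ ⊆ X whose linear span is dense in X such that the one-sided directional derivative f'₊(x,u) exists for all u ∈ Sₓ, then f is Fréchet differentiable at x. -/

import Mathlib

/-!
At a point `x` where `f` is Lipschitz, a one-sided directional derivative `d` in a direction `v`
is either *relatively strict*, `‖f (z + t • v) - f z - t • d‖ = o(t + ‖z - x‖)` as `z → x` and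
`t → 0+`, or it fails to be so at some definite level. Points of the second kind, sorted by
countably many rational parameters (Lipschitz constant and radius, approximations of `v` and `d`,
the level), form porous sets: points of the same set near both `z` and `z + t • v` would force the
defect at `(z, t)` below the level, so one of the two balls of radius comparable to `t + ‖z - x‖`
misses the set.

Off the resulting σ-porous set, relatively strict derivatives in finitely many directions that
span `X` modulo the closed finite-codimensional subspace `M` can be added, one direction at a
time, to the derivative along `M`; the last step gives a Fréchet derivative.
-/

open Metric Set Topology Filter

variable {X Y : Type*} [NormedAddCommGroup X] [NormedSpace ℝ X] [CompleteSpace X]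
  [NormedAddCommGroup Y] [NormedSpace ℝ Y] [CompleteSpace Y]

/-- `f` is Fréchet differentiable at `a` along the subspace `V`. -/
def FrechetDiffAlong (f : X → Y) (V : Submodule ℝ X) (a : X) : Prop :=
  DifferentiableAt ℝ (fun v : V => f (a + (v : X))) (0 : V)

/-- `f` is Lipschitz at `x`. -/
def LipschitzAtPt (f : X → Y) (x : X) : Prop :=
  ∃ L : ℝ, ∀ᶠ y in nhds x, ‖f y - f x‖ ≤ L * ‖y - x‖

/-- The one-sided directional derivative `f'₊(x,u)` exists. -/
def HasOneSidedDirDeriv (f : X → Y) (x u : X) : Prop :=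
  ∃ d : Y, Tendsto (fun t : ℝ => t⁻¹ • (f (x + t • u) - f x)) (nhdsWithin 0 (Ioi 0)) (nhds d)

/-- `A` is (upper) porous at `x`. -/
def PorousAt (A : Set X) (x : X) : Prop :=
  ∃ c > (0 : ℝ), ∀ δ > (0 : ℝ), ∃ t, t ∈ ball x δ ∧ t ≠ x ∧ ball t (c * dist t x) ∩ A = ∅

/-- `A` is (upper) porous: porous at each of its points. -/
def Porous (A : Set X) : Prop := ∀ x ∈ A, PorousAt A x

/-- `A` is σ-(upper) porous: a countable union of porous sets. -/
def SigmaPorous (A : Set X) : Prop :=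
  ∃ u : ℕ → Set X, (∀ n, Porous (u n)) ∧ A = ⋃ n, u n

section Porosity

variable {E : Type*} [NormedAddCommGroup E]

theorem Porous.mono {A B : Set E} (hB : Porous B) (hAB : A ⊆ B) : Porous A := by
  intro x hx
  obtain ⟨c, hc, hholes⟩ := hB x (hAB hx)
  refine ⟨c, hc, fun δ hδ => ?_⟩
  obtain ⟨w, hw, hwx, hball⟩ := hholes δ hδ
  exact ⟨w, hw, hwx, subset_empty_iff.1 (hball ▸ inter_subset_inter_right _ hAB)⟩

theorem porousAt_of_forall_exists_ball {A : Set E} {x : E} (hx : x ∈ A) {c : ℝ} (hc : 0 < c)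
    (h : ∀ δ > 0, ∃ w ρ, dist w x < δ ∧ 0 < ρ ∧ c * dist w x ≤ ρ ∧ ball w ρ ∩ A = ∅) :
    PorousAt A x := by
  refine ⟨c, hc, fun δ hδ => ?_⟩
  obtain ⟨w, ρ, hw, hρ, hcρ, hball⟩ := h δ hδ
  refine ⟨w, mem_ball.2 hw, ?_, subset_empty_iff.1 ?_⟩
  · rintro rfl
    exact (eq_empty_iff_forall_notMem.1 hball) w ⟨mem_ball_self hρ, hx⟩
  · exact hball ▸ inter_subset_inter_left _ (ball_subset_ball hcρ)

theorem sigmaPorous_iUnion {ι : Type*} [Countable ι] [Nonempty ι] {u : ι → Set E}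
    (hu : ∀ i, Porous (u i)) : SigmaPorous (⋃ i, u i) := by
  obtain ⟨g, hg⟩ := exists_surjective_nat ι
  exact ⟨u ∘ g, fun n => hu (g n), (hg.iUnion_comp u).symm⟩

end Porosity

section Derivatives

variable {E F : Type*} [NormedAddCommGroup E] [NormedSpace ℝ E]
  [NormedAddCommGroup F] [NormedSpace ℝ F] {f : E → F} {x v : E} {d : F}

def HasRelStrictDirDeriv (f : E → F) (x v : E) (d : F) : Prop :=
  ∀ ε > 0, ∀ᶠ p : E × ℝ in 𝓝 x ×ˢ 𝓝[>] 0,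
    ‖f (p.1 + p.2 • v) - f p.1 - p.2 • d‖ ≤ ε * (p.2 + ‖p.1 - x‖)

theorem HasRelStrictDirDeriv.eventually_norm_le (h : HasRelStrictDirDeriv f x v d) {ε : ℝ}
    (hε : 0 < ε) :
    ∀ᶠ p : E × ℝ in 𝓝 (x, 0), ‖f (p.1 + p.2 • v) - f p.1 - p.2 • d‖ ≤
      ε * (|p.2| + ‖p.1 - x‖ + ‖p.1 + p.2 • v - x‖) := by
  have hpos : ∀ᶠ p : E × ℝ in 𝓝 (x, 0), 0 < p.2 →
      ‖f (p.1 + p.2 • v) - f p.1 - p.2 • d‖ ≤ ε * (p.2 + ‖p.1 - x‖) := by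
    have hfilter : 𝓝 x ×ˢ 𝓝[>] (0 : ℝ) = 𝓝[univ ×ˢ Ioi 0] (x, 0) := by
      rw [nhdsWithin_prod_eq, nhdsWithin_univ]
    have := h ε hε
    rw [hfilter, eventually_nhdsWithin_iff] at this
    simpa only [mem_prod, mem_univ, mem_Ioi, true_and] using this
  -- a backward step from `z` is a forward step from `z + t • v`
  have hneg : ∀ᶠ p : E × ℝ in 𝓝 (x, 0), p.2 < 0 →
      ‖f (p.1 + p.2 • v) - f p.1 - p.2 • d‖ ≤ ε * (-p.2 + ‖p.1 + p.2 • v - x‖) := by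
    have hflip : Tendsto (fun p : E × ℝ => (p.1 + p.2 • v, -p.2)) (𝓝 (x, 0)) (𝓝 (x, 0)) :=
      (by fun_prop : Continuous fun p : E × ℝ => (p.1 + p.2 • v, -p.2)).tendsto' _ _ (by simp)
    filter_upwards [hflip.eventually hpos] with p hp hp2
    have := hp (neg_pos.2 hp2)
    rw [neg_smul, add_neg_cancel_right] at this
    have hrev : f (p.1 + p.2 • v) - f p.1 - p.2 • d =
        -(f p.1 - f (p.1 + p.2 • v) - -p.2 • d) := by
      rw [neg_smul]
      abel
    rwa [hrev, norm_neg]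
  filter_upwards [hpos, hneg] with p hp hn
  have h₁ := norm_nonneg (p.1 - x)
  have h₂ := norm_nonneg (p.1 + p.2 • v - x)
  rcases lt_trichotomy p.2 0 with h | h | h
  · refine (hn h).trans (mul_le_mul_of_nonneg_left ?_ hε.le)
    rw [abs_of_neg h]
    linarith
  · simp only [h, zero_smul, add_zero, sub_self, norm_zero]
    positivity
  · refine (hp h).trans (mul_le_mul_of_nonneg_left ?_ hε.le)
    rw [abs_of_pos h]
    linarith

theorem HasRelStrictDirDeriv.hasFDerivAt_sub_comp (h : HasRelStrictDirDeriv f x v d)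
    (a : E →L[ℝ] ℝ) :
    HasFDerivAt (fun y => f y - f (y - a (y - x) • v)) (a.smulRight d) x := by
  rw [hasFDerivAt_iff_isLittleO_nhds_zero, Asymptotics.isLittleO_iff]
  intro c hc
  set C := ‖a‖ + (1 + ‖a‖ * ‖v‖) + 1
  have hC : 0 < C := by positivity
  have hsplit : Tendsto (fun k : E => (x + (k - a k • v), a k)) (𝓝 0) (𝓝 (x, 0)) :=
    (by fun_prop : Continuous fun k : E => (x + (k - a k • v), a k)).tendsto' _ _ (by simp)
  filter_upwards [hsplit.eventually (h.eventually_norm_le (div_pos hc hC))] with k hk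
  rw [add_assoc, sub_add_cancel, add_sub_cancel_left, add_sub_cancel_left, ← add_sub_assoc] at hk
  have hak : |a k| ≤ ‖a‖ * ‖k‖ := by simpa using a.le_opNorm k
  have hproj : ‖k - a k • v‖ ≤ (1 + ‖a‖ * ‖v‖) * ‖k‖ := by
    calc ‖k - a k • v‖ ≤ ‖k‖ + |a k| * ‖v‖ := by simpa [norm_smul] using norm_sub_le k (a k • v)
      _ ≤ ‖k‖ + ‖a‖ * ‖k‖ * ‖v‖ := by gcongr
      _ = (1 + ‖a‖ * ‖v‖) * ‖k‖ := by ring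
  simp only [add_sub_cancel_left, sub_self, map_zero, zero_smul, sub_zero,
    ContinuousLinearMap.smulRight_apply]
  calc ‖f (x + k) - f (x + k - a k • v) - a k • d‖
      ≤ c / C * (|a k| + ‖k - a k • v‖ + ‖k‖) := hk
    _ ≤ c / C * (‖a‖ * ‖k‖ + (1 + ‖a‖ * ‖v‖) * ‖k‖ + ‖k‖) := by gcongr
    _ = c * ‖k‖ := by field_simp; ring

theorem HasFDerivWithinAt.sup_span_singleton {N : Submodule ℝ E} {T : E →L[ℝ] F}
    (hT : HasFDerivWithinAt f T {y | y - x ∈ N} x) (hv : HasRelStrictDirDeriv f x v d)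
    {a : E →L[ℝ] ℝ} (hav : a v = 1) (haN : ∀ m ∈ N, a m = 0) :
    HasFDerivWithinAt f (T.comp (ContinuousLinearMap.id ℝ E - a.smulRight v) + a.smulRight d)
      {y | y - x ∈ N ⊔ ℝ ∙ v} x := by
  set P := ContinuousLinearMap.id ℝ E - a.smulRight v
  -- `g` projects `x + N ⊔ ℝ ∙ v` onto `x + N` along `v`
  set g : E → E := fun y => y - a (y - x) • v
  have hg : HasFDerivAt g P x := by
    have : g = fun y => P y + a x • v := by
      funext y
      simp only [g, P, map_sub, sub_smul, sub_apply, ContinuousLinearMap.id_apply,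
        ContinuousLinearMap.smulRight_apply]
      abel
    rw [this]
    exact P.hasFDerivAt.add_const _
  have hgx : g x = x := by simp [g]
  have hmaps : MapsTo g {y | y - x ∈ N ⊔ ℝ ∙ v} {y | y - x ∈ N} := by
    intro y hy
    obtain ⟨m, hm, w, hw, hmw⟩ := Submodule.mem_sup.1 hy
    obtain ⟨r, rfl⟩ := Submodule.mem_span_singleton.1 hw
    have har : a (y - x) = r := by simp [← hmw, haN m hm, hav]
    show y - a (y - x) • v - x ∈ N
    rwa [har, sub_right_comm, ← hmw, add_sub_cancel_right]
  have hT' : HasFDerivWithinAt f T {y | y - x ∈ N} (g x) := by rwa [hgx]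
  have hcomp := hT'.comp x hg.hasFDerivWithinAt hmaps
  convert hcomp.add (hv.hasFDerivAt_sub_comp a).hasFDerivWithinAt using 1
  funext y
  simp [g]

theorem FrechetDiffAlong.exists_hasFDerivWithinAt {M : Submodule ℝ E} (hM : M.ClosedComplemented)
    (hf : FrechetDiffAlong f M x) : ∃ T : E →L[ℝ] F, HasFDerivWithinAt f T {y | y - x ∈ M} x := by
  obtain ⟨P, hP⟩ := hM
  have hPx : HasFDerivAt (fun y => P (y - x)) P x := by
    simpa [map_sub] using P.hasFDerivAt.sub_const (P x)
  have hφ : HasFDerivAt (fun m : M => f (x + m)) (fderiv ℝ (fun m : M => f (x + m)) 0)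
      (P (x - x)) := by
    simpa using hf.hasFDerivAt
  refine ⟨_, (hφ.comp x hPx).hasFDerivWithinAt.congr (fun y hy => ?_) (by simp)⟩
  simp only [Function.comp_apply, show P (y - x) = ⟨y - x, hy⟩ from hP ⟨y - x, hy⟩,
    add_sub_cancel]

theorem exists_dual_eq_one_of_notMem {N : Submodule ℝ E} (hN : IsClosed (N : Set E)) (hv : v ∉ N) :
    ∃ a : E →L[ℝ] ℝ, a v = 1 ∧ ∀ m ∈ N, a m = 0 := by
  have : IsClosed (N : Set E) := hN
  obtain ⟨g, hg⟩ := SeparatingDual.exists_eq_one (R := ℝ) (x := N.mkQ v)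
    (by simpa [Submodule.Quotient.mk_eq_zero] using hv)
  exact ⟨g.comp N.mkQL, hg, fun m hm => by simp [(Submodule.Quotient.mk_eq_zero N).2 hm]⟩

theorem exists_finset_subset_sup_span_eq_top {M : Submodule ℝ E} (hM : IsClosed (M : Set E))
    [FiniteDimensional ℝ (E ⧸ M)] {S : Set E} (hS : Dense (Submodule.span ℝ S : Set E)) :
    ∃ s : Finset E, ↑s ⊆ S ∧ M ⊔ Submodule.span ℝ s = ⊤ := by
  classical
  have hclosed := Submodule.isClosed_mono_of_finiteDimensional_quotient hM
    (le_sup_left : M ≤ M ⊔ Submodule.span ℝ S)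
  have htop : M ⊔ Submodule.span ℝ S = ⊤ := by
    rw [← SetLike.coe_set_eq, Submodule.top_coe, ← hclosed.closure_eq]
    exact (hS.mono (SetLike.coe_subset_coe.2 le_sup_right)).closure_eq
  have hspan : Submodule.span ℝ (M.mkQ '' S) = ⊤ := by
    rwa [Submodule.span_image, Submodule.map_mkQ_eq_top]
  obtain ⟨t, htS, hts⟩ :=
    (Submodule.fg_span_iff_fg_span_finset_subset _).1 (hspan ▸ Module.Finite.fg_top)
  obtain ⟨s, hsS, rfl⟩ := Finset.subset_set_image_iff.1 htS
  refine ⟨s, hsS, (Submodule.map_mkQ_eq_top _ _).1 ?_⟩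
  rw [← Submodule.span_image, ← Finset.coe_image, ← hts, hspan]

theorem exists_hasFDerivWithinAt_sup_span {M : Submodule ℝ E} (hM : IsClosed (M : Set E))
    [FiniteDimensional ℝ (E ⧸ M)] {T₀ : E →L[ℝ] F} (hT₀ : HasFDerivWithinAt f T₀ {y | y - x ∈ M} x)
    {S : Set E} (hS : ∀ v ∈ S, ∃ d, HasRelStrictDirDeriv f x v d) (s : Finset E) (hsS : ↑s ⊆ S) :
    ∃ T : E →L[ℝ] F, HasFDerivWithinAt f T {y | y - x ∈ M ⊔ Submodule.span ℝ s} x := by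
  classical
  induction s using Finset.induction_on with
  | empty => exact ⟨T₀, by simpa using hT₀⟩
  | insert v s _ ih =>
    obtain ⟨T, hT⟩ := ih (subset_trans (by simp) hsS)
    rw [Finset.coe_insert, Submodule.span_insert, sup_comm (ℝ ∙ v), ← sup_assoc]
    by_cases hv : v ∈ M ⊔ Submodule.span ℝ s
    · rw [sup_eq_left.2 ((Submodule.span_singleton_le_iff_mem _ _).2 hv)]
      exact ⟨T, hT⟩
    · obtain ⟨d, hd⟩ := hS v (hsS (by simp))
      obtain ⟨a, hav, haN⟩ := exists_dual_eq_one_of_notMem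
        (Submodule.isClosed_mono_of_finiteDimensional_quotient hM le_sup_left) hv
      exact ⟨_, hT.sup_span_singleton hd hav haN⟩

theorem differentiableAt_of_hasRelStrictDirDeriv {M : Submodule ℝ E} (hM : IsClosed (M : Set E))
    [FiniteDimensional ℝ (E ⧸ M)] (hfM : FrechetDiffAlong f M x) {S : Set E}
    (hS : Dense (Submodule.span ℝ S : Set E)) (hSd : ∀ v ∈ S, ∃ d, HasRelStrictDirDeriv f x v d) :
    DifferentiableAt ℝ f x := by
  obtain ⟨T₀, hT₀⟩ := hfM.exists_hasFDerivWithinAt (.of_finiteDimensional_quotient hM)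
  obtain ⟨s, hsS, htop⟩ := exists_finset_subset_sup_span_eq_top hM hS
  obtain ⟨T, hT⟩ := exists_hasFDerivWithinAt_sup_span hM hT₀ hSd s hsS
  simp only [htop, Submodule.mem_top, ofPred_true, hasFDerivWithinAt_univ] at hT
  exact hT.differentiableAt

end Derivatives

section ExceptionalSets

variable {E F : Type*} [NormedAddCommGroup E] [NormedSpace ℝ E]
  [NormedAddCommGroup F] [NormedSpace ℝ F] {f : E → F} {v₀ : E} {d : F} {K : ℕ} {r θ : ℝ}

/-- The level `(6K + 1)θ` is the bound on the defect that two points of the set near the two ends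
of a step impose, see `norm_sub_sub_le_of_mem_nonRelStrictSet`; this makes the set porous. -/
def nonRelStrictSet (f : E → F) (v₀ : E) (d : F) (K : ℕ) (r θ : ℝ) : Set E :=
  {x | 0 < r ∧ 0 < θ ∧ (∀ y, ‖y - x‖ < r → ‖f y - f x‖ ≤ K * ‖y - x‖) ∧
    ∃ v, ‖v - v₀‖ ≤ θ ∧ (∀ t, 0 < t → t < r → ‖f (x + t • v) - f x - t • d‖ ≤ θ * t) ∧
      ∃ᶠ p : E × ℝ in 𝓝 x ×ˢ 𝓝[>] 0,
        (6 * K + 1) * θ * (p.2 + ‖p.1 - x‖) < ‖f (p.1 + p.2 • v) - f p.1 - p.2 • d‖}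

theorem norm_sub_sub_le_of_mem_nonRelStrictSet {y₁ y₂ z v : E} {t s : ℝ}
    (hy₁ : y₁ ∈ nonRelStrictSet f v₀ d K r θ) (hy₂ : y₂ ∈ nonRelStrictSet f v₀ d K r θ)
    (hv : ‖v - v₀‖ ≤ θ) (ht : 0 < t) (hts : t ≤ s) (htr : t < r) (hsr : 4 * θ * s < r)
    (hz : ‖z - y₁‖ < θ * s) (hzv : ‖z + t • v - y₂‖ < θ * s) :
    ‖f (z + t • v) - f z - t • d‖ ≤ (6 * K + 1) * θ * s := by
  obtain ⟨-, hθ, hL₁, w, hw, hdir, -⟩ := hy₁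
  obtain ⟨-, -, hL₂, -⟩ := hy₂
  have hK : (0 : ℝ) ≤ K := K.cast_nonneg
  have hθs : 0 ≤ θ * s := mul_nonneg hθ.le (ht.le.trans hts)
  have hwv : ‖w - v‖ ≤ 2 * θ := by
    calc ‖w - v‖ = ‖(w - v₀) - (v - v₀)‖ := by rw [sub_sub_sub_cancel_right]
      _ ≤ ‖w - v₀‖ + ‖v - v₀‖ := norm_sub_le _ _
      _ ≤ 2 * θ := by linarith
  have hstep : ‖y₁ + t • w - y₂‖ ≤ 4 * θ * s := by
    calc ‖y₁ + t • w - y₂‖ = ‖(y₁ - z) + t • (w - v) + (z + t • v - y₂)‖ := by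
          rw [smul_sub]; abel_nf
      _ ≤ ‖y₁ - z‖ + t * ‖w - v‖ + ‖z + t • v - y₂‖ := by
          refine norm_add₃_le.trans_eq ?_
          rw [norm_smul, Real.norm_of_nonneg ht.le]
      _ ≤ θ * s + t * (2 * θ) + θ * s := by
          rw [norm_sub_rev] at hz
          gcongr
      _ ≤ 4 * θ * s := by nlinarith
  have e₁ : ‖f (z + t • v) - f y₂‖ ≤ K * (θ * s) :=
    (hL₂ _ (by linarith)).trans (by gcongr)
  have e₂ : ‖f y₂ - f (y₁ + t • w)‖ ≤ K * (4 * θ * s) := by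
    rw [norm_sub_rev]
    exact (hL₂ _ (by linarith)).trans (by gcongr)
  have e₃ : ‖f (y₁ + t • w) - f y₁ - t • d‖ ≤ θ * t := hdir t ht htr
  have e₄ : ‖f y₁ - f z‖ ≤ K * (θ * s) := by
    rw [norm_sub_rev]
    exact (hL₁ _ (by linarith)).trans (by gcongr)
  calc ‖f (z + t • v) - f z - t • d‖
      = ‖(f (z + t • v) - f y₂) + (f y₂ - f (y₁ + t • w)) + (f (y₁ + t • w) - f y₁ - t • d)
          + (f y₁ - f z)‖ := by abel_nf
    _ ≤ K * (θ * s) + K * (4 * θ * s) + θ * t + K * (θ * s) :=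
        norm_add₄_le.trans (by gcongr)
    _ ≤ (6 * K + 1) * θ * s := by nlinarith

theorem porous_nonRelStrictSet : Porous (nonRelStrictSet f v₀ d K r θ) := by
  intro x hx
  obtain ⟨hr, hθ, -, v, hv, -, hbad⟩ := id hx
  set c := 1 + ‖v‖
  have hc : 0 < c := by positivity
  refine porousAt_of_forall_exists_ball hx (c := θ / c) (by positivity) fun δ hδ => ?_
  set η := min (δ / c) (min r (r / (4 * θ)))
  have hη : 0 < η := by positivity
  have hsmall : ∀ᶠ p : E × ℝ in 𝓝 x ×ˢ 𝓝[>] 0, 0 < p.2 ∧ p.2 + ‖p.1 - x‖ < η := by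
    have hle : 𝓝 x ×ˢ 𝓝[>] (0 : ℝ) ≤ 𝓝 (x, 0) := by
      rw [nhds_prod_eq]
      exact prod_mono le_rfl nhdsWithin_le_nhds
    have hsize : Tendsto (fun p : E × ℝ => p.2 + ‖p.1 - x‖) (𝓝 x ×ˢ 𝓝[>] 0) (𝓝 0) :=
      ((by fun_prop : Continuous fun p : E × ℝ => p.2 + ‖p.1 - x‖).tendsto' (x, 0) 0
        (by simp)).mono_left hle
    exact (eventually_mem_nhdsWithin.prod_inr _).and (hsize.eventually (eventually_lt_nhds hη))
  obtain ⟨⟨z, t⟩, hdefect, ht, hs⟩ := (hbad.and_eventually hsmall).exists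
  set s := t + ‖z - x‖
  have hzx := norm_nonneg (z - x)
  have hsδ : c * s < δ := by
    have := hs.trans_le (min_le_left _ _)
    rwa [lt_div_iff₀' hc] at this
  have hsr : s < r := hs.trans_le ((min_le_right _ _).trans (min_le_left _ _))
  have h4θs : 4 * θ * s < r := by
    have := hs.trans_le ((min_le_right _ _).trans (min_le_right _ _))
    rw [lt_div_iff₀' (by positivity)] at this
    linarith
  have hθs : 0 < θ * s := by positivity
  have hhole : ∀ w, ‖w - x‖ ≤ c * s → ball w (θ * s) ∩ nonRelStrictSet f v₀ d K r θ = ∅ →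
      ∃ w ρ, dist w x < δ ∧ 0 < ρ ∧ θ / c * dist w x ≤ ρ ∧
        ball w ρ ∩ nonRelStrictSet f v₀ d K r θ = ∅ := by
    intro w hw hball
    refine ⟨w, θ * s, by rw [dist_eq_norm]; linarith, hθs, ?_, hball⟩
    rw [dist_eq_norm, div_mul_eq_mul_div, div_le_iff₀ hc]
    nlinarith
  -- two points of the set close to `z` and to `z + t • v` would force a small defect
  by_cases hz : ball z (θ * s) ∩ nonRelStrictSet f v₀ d K r θ = ∅
  · exact hhole z (by nlinarith [norm_nonneg v]) hz
  refine hhole (z + t • v) ?_ ?_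
  · calc ‖z + t • v - x‖ ≤ ‖z - x‖ + t * ‖v‖ := by
          simpa [norm_smul, abs_of_pos ht, add_sub_right_comm] using norm_add_le (z - x) (t • v)
      _ ≤ c * s := by nlinarith [norm_nonneg v]
  · obtain ⟨y₁, hy₁z, hy₁⟩ := nonempty_iff_ne_empty.2 hz
    refine eq_empty_iff_forall_notMem.2 fun y₂ ⟨hy₂z, hy₂⟩ => hdefect.not_ge ?_
    rw [mem_ball, dist_eq_norm] at hy₁z hy₂z
    rw [norm_sub_rev] at hy₁z hy₂z
    exact norm_sub_sub_le_of_mem_nonRelStrictSet hy₁ hy₂ hv ht (by linarith) (by linarith)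
      h4θs hy₁z hy₂z

theorem exists_mem_nonRelStrictSet {x v : E} (hf : LipschitzAtPt f x)
    (hd : Tendsto (fun t : ℝ => t⁻¹ • (f (x + t • v) - f x)) (𝓝[>] 0) (𝓝 d))
    (hns : ¬ HasRelStrictDirDeriv f x v d) {vs : ℕ → E} (hvs : DenseRange vs) {ds : ℕ → F}
    (hds : DenseRange ds) :
    ∃ (i j K : ℕ) (r θ : ℚ), x ∈ nonRelStrictSet f (vs i) (ds j) K r θ := by
  obtain ⟨L, hL⟩ := hf
  obtain ⟨r₁, hr₁, hL⟩ := Metric.eventually_nhds_iff.1 hL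
  obtain ⟨ε, hε, hbad⟩ : ∃ ε > 0, ∃ᶠ p : E × ℝ in 𝓝 x ×ˢ 𝓝[>] 0,
      ε * (p.2 + ‖p.1 - x‖) < ‖f (p.1 + p.2 • v) - f p.1 - p.2 • d‖ := by
    simpa [HasRelStrictDirDeriv] using hns
  set K := ⌈L⌉₊
  obtain ⟨θ, hθ, hθε⟩ := exists_rat_btwn (by positivity : (0 : ℝ) < ε / (2 * (6 * K + 1)))
  rw [lt_div_iff₀ (by positivity)] at hθε
  obtain ⟨i, hi⟩ := hvs.exists_dist_lt v hθ
  obtain ⟨j, hj⟩ := hds.exists_dist_lt d (half_pos hθ)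
  rw [dist_eq_norm] at hi hj
  obtain ⟨r₂, hr₂, hquot⟩ := Metric.tendsto_nhdsWithin_nhds.1 hd (θ / 2) (half_pos hθ)
  obtain ⟨r, hr, hrr⟩ := exists_rat_btwn (lt_min hr₁ hr₂)
  have hshift : ∀ a : F, ∀ t : ℝ, 0 < t → |‖a - t • ds j‖ - ‖a - t • d‖| ≤ t * (θ / 2) := by
    intro a t ht
    refine (abs_norm_sub_norm_le _ _).trans ?_
    rw [sub_sub_sub_cancel_left, ← smul_sub, norm_smul, Real.norm_of_nonneg ht.le]
    gcongr
  refine ⟨i, j, K, r, θ, hr, hθ, fun y hy => ?_, v, hi.le, fun t ht htr => ?_, ?_⟩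
  · refine (hL (by rw [dist_eq_norm]; linarith [min_le_left r₁ r₂])).trans ?_
    gcongr
    exact Nat.le_ceil L
  · have hq := hquot ht
      (by rw [Real.dist_eq, sub_zero, abs_of_pos ht]; linarith [min_le_right r₁ r₂])
    rw [dist_eq_norm] at hq
    have hd' : ‖f (x + t • v) - f x - t • d‖ ≤ t * (θ / 2) := by
      rw [← smul_inv_smul₀ ht.ne' (f (x + t • v) - f x), ← smul_sub, norm_smul,
        Real.norm_of_nonneg ht.le]
      gcongr
    linarith [(abs_le.1 (hshift (f (x + t • v) - f x) t ht)).2]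
  · refine (hbad.and_eventually (eventually_mem_nhdsWithin.prod_inr _)).mono
      fun p ⟨hp, (hp₂ : 0 < p.2)⟩ => ?_
    have hs : 0 < p.2 + ‖p.1 - x‖ := by positivity
    have hK : (0 : ℝ) ≤ K := K.cast_nonneg
    have hlevel : (6 * K + 1) * θ * (p.2 + ‖p.1 - x‖) ≤ ε / 2 * (p.2 + ‖p.1 - x‖) := by
      gcongr
      linarith
    have hθs : θ / 2 * p.2 ≤ ε / 2 * (p.2 + ‖p.1 - x‖) := by
      gcongr
      · nlinarith
      · linarith [norm_nonneg (p.1 - x)]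
    linarith [(abs_le.1 (hshift (f (p.1 + p.2 • v) - f p.1) p.2 hp₂)).1]

end ExceptionalSets

theorem sigmaPorous_exceptional_set_finite_codim_and_directional_general
    [TopologicalSpace.SeparableSpace X] [TopologicalSpace.SeparableSpace Y]
    (G : Set X) (f : X → Y) :
    ∃ A : Set X, A ⊆ G ∧ SigmaPorous A ∧
      ∀ x ∈ G \ A,
        (LipschitzAtPt f x ∧
         (∃ M : Submodule ℝ X, IsClosed (M : Set X) ∧ FiniteDimensional ℝ (X ⧸ M) ∧
            FrechetDiffAlong f M x) ∧
         (∃ S : Set X, Dense (Submodule.span ℝ S : Set X) ∧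
            ∀ u ∈ S, HasOneSidedDirDeriv f x u)) →
        DifferentiableAt ℝ f x := by
  set vs := TopologicalSpace.denseSeq X
  set ds := TopologicalSpace.denseSeq Y
  set P : ℕ × ℕ × ℕ × ℚ × ℚ → Set X := fun k =>
    G ∩ nonRelStrictSet f (vs k.1) (ds k.2.1) k.2.2.1 k.2.2.2.1 k.2.2.2.2
  refine ⟨⋃ k, P k, iUnion_subset fun _ => inter_subset_left,
    sigmaPorous_iUnion fun _ => porous_nonRelStrictSet.mono inter_subset_right, ?_⟩
  rintro x ⟨hxG, hxA⟩ ⟨hf, ⟨M, hM, _, hfM⟩, S, hS, hSd⟩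
  refine differentiableAt_of_hasRelStrictDirDeriv hM hfM hS fun v hv => ?_
  obtain ⟨d, hd⟩ := hSd v hv
  refine ⟨d, by_contra fun hns => hxA ?_⟩
  obtain ⟨i, j, K, r, θ, hx⟩ := exists_mem_nonRelStrictSet hf hd hns
    (TopologicalSpace.denseRange_denseSeq X) (TopologicalSpace.denseRange_denseSeq Y)
  exact mem_iUnion.2 ⟨(i, j, K, r, θ), hxG, hx⟩

theorem sigmaPorous_exceptional_set_finite_codim_and_directional
    [TopologicalSpace.SeparableSpace X] [TopologicalSpace.SeparableSpace Y]
    (G : Set X) (hG : IsOpen G) (f : X → Y) :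
    ∃ A : Set X, A ⊆ G ∧ SigmaPorous A ∧
      ∀ x ∈ G \ A,
        (LipschitzAtPt f x ∧
         (∃ M : Submodule ℝ X, IsClosed (M : Set X) ∧ FiniteDimensional ℝ (X ⧸ M) ∧
            FrechetDiffAlong f M x) ∧
         (∃ S : Set X, Dense (Submodule.span ℝ S : Set X) ∧
            ∀ u ∈ S, HasOneSidedDirDeriv f x u)) →
        DifferentiableAt ℝ f x :=
  sigmaPorous_exceptional_set_finite_codim_and_directional_general G f
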